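/- arXiv:1106.3223 — 2 statements merged into one kernel-verified Lean document; each statement's English description precedes it below -/
import Mathlib

section
/- Let R be a ring with 1, n ≥ 1, and A an n×n matrix over R. Let p(x) = λ_0 + λ_1 x + ⋯ + λ_{n−1} x^{n−1} + n!·x^n be the symmetric characteristic polynomial of A, and let C_0, C_1, …, C_n be the coefficient matrices determined by n·(xI − A)(xI − A)* = p(x)·I + C_0 + C_1 x + ⋯ + C_n x^n. Then the right Cayley–Hamilton identity (λ_0 I + C_0) + A(λ_1 I + C_1) + ⋯ + A^{n−1}(λ_{n−1} I + C_{n−1}) + A^n(n!·I + C_n) = 0 holds. -/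
open Polynomial in
/-- The preadjoint `A*` of an `n × n` matrix `A` over a (possibly noncommutative) ring `R`:
its `(r, s)` entry is the sum, over all permutations `τ, ρ` of `Fin n` with `τ s = s` and
`ρ s = r`, of `sgn ρ` times the ordered product
`a_{τ(1),ρ(τ(1))} ⋯ a_{τ(s-1),ρ(τ(s-1))} · a_{τ(s+1),ρ(τ(s+1))} ⋯ a_{τ(n),ρ(τ(n))}`
(the factor at position `s` is omitted). -/
def Matrix.preadjoint {n : ℕ} {R : Type*} [Ring R] (A : Matrix (Fin n) (Fin n) R) :
    Matrix (Fin n) (Fin n) R :=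
  fun r s =>
    ∑ τ : Equiv.Perm (Fin n), ∑ ρ : Equiv.Perm (Fin n),
      if τ s = s ∧ ρ s = r then
        ((Equiv.Perm.sign ρ : ℤ)) •
          (((List.finRange n).filter (fun k => k ≠ s)).map
            (fun k => A (τ k) (ρ (τ k)))).prod
      else 0

open Polynomial in
/-- The characteristic matrix `x·I - A` of `A`, as a matrix over `R[x]`. -/
noncomputable def Matrix.charMat {n : ℕ} {R : Type*} [Ring R] (A : Matrix (Fin n) (Fin n) R) :
    Matrix (Fin n) (Fin n) R[X] :=
  (X : R[X]) • (1 : Matrix (Fin n) (Fin n) R[X]) - A.map C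

/-- The symmetric determinant `s-det A = tr(A* · A) = tr(A · A*)`. -/
def Matrix.sdet {n : ℕ} {R : Type*} [Ring R] (A : Matrix (Fin n) (Fin n) R) : R :=
  Matrix.trace (A.preadjoint * A)

open Polynomial in
/-- The symmetric characteristic polynomial `p(x) = s-det(x·I - A) ∈ R[x]`. -/
noncomputable def Matrix.sCharPoly {n : ℕ} {R : Type*} [Ring R] (A : Matrix (Fin n) (Fin n) R) : R[X] :=
  A.charMat.sdet

/-!
Write `Q = (xI - A)*` and `P_k` for the coefficient matrix of `x^k` in a polynomial matrix `P`.
By definition `λ_k I + C_k = n · ((xI - A) Q)_k`, and `((xI - A) Q)_k = Q_{k-1} - A Q_k`, so the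
sum `∑_{k ≤ n} A^k ((xI - A) Q)_k` telescopes to `-A^{n+1} Q_n`. Every entry of `Q` is a sum of
products of `n - 1` entries of `xI - A`, hence has degree below `n`, so `Q_n = 0`.
-/

open Polynomial

namespace Matrix

variable {l m ι : Type*} {R : Type*} [Ring R]

noncomputable def polyCoeff (P : Matrix m ι R[X]) (k : ℕ) : Matrix m ι R :=
  P.map (coeff · k)

@[simp]
lemma polyCoeff_apply (P : Matrix m ι R[X]) (k : ℕ) (i : m) (j : ι) :
    P.polyCoeff k i j = (P i j).coeff k :=
  rfl

lemma polyCoeff_sub (P Q : Matrix m ι R[X]) (k : ℕ) :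
    (P - Q).polyCoeff k = P.polyCoeff k - Q.polyCoeff k := by
  ext i j
  simp

lemma polyCoeff_nsmul (N : ℕ) (P : Matrix m ι R[X]) (k : ℕ) :
    (N • P).polyCoeff k = N • P.polyCoeff k := by
  ext i j
  simp

lemma polyCoeff_X_smul_succ (P : Matrix m ι R[X]) (k : ℕ) :
    ((X : R[X]) • P).polyCoeff (k + 1) = P.polyCoeff k := by
  ext i j
  simp [coeff_X_mul]

lemma polyCoeff_X_smul_zero (P : Matrix m ι R[X]) :
    ((X : R[X]) • P).polyCoeff 0 = 0 := by
  ext i j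
  simp

lemma polyCoeff_smul_one [Fintype ι] [DecidableEq ι] (p : R[X]) (k : ℕ) :
    (p • (1 : Matrix ι ι R[X])).polyCoeff k = p.coeff k • 1 := by
  ext i j
  rcases eq_or_ne i j with rfl | h <;> simp [*]

lemma polyCoeff_map_C_mul [Fintype m] (M : Matrix l m R) (P : Matrix m ι R[X]) (k : ℕ) :
    (M.map C * P).polyCoeff k = M * P.polyCoeff k := by
  ext i j
  simp [mul_apply, coeff_C_mul]

lemma sum_pow_mul_polyCoeff_charmatrix_mul [Fintype ι] [DecidableEq ι]
    (M : Matrix ι ι R) (P : Matrix ι ι R[X]) (m : ℕ) :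
    ∑ k ∈ Finset.range (m + 1), M ^ k * (((X : R[X]) • 1 - M.map C) * P).polyCoeff k
      = -(M ^ (m + 1) * P.polyCoeff m) := by
  simp only [sub_mul, smul_mul, one_mul, polyCoeff_sub, polyCoeff_map_C_mul]
  induction m with
  | zero => simp [polyCoeff_X_smul_zero]
  | succ m ih =>
    rw [Finset.sum_range_succ, ih, polyCoeff_X_smul_succ, mul_sub, ← mul_assoc, ← pow_succ]
    abel

lemma natDegree_preadjoint_apply_le {n : ℕ} {P : Matrix (Fin n) (Fin n) R[X]} {d : ℕ}
    (hP : ∀ i j, (P i j).natDegree ≤ d) (r s : Fin n) :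
    (P.preadjoint r s).natDegree ≤ (n - 1) * d := by
  refine natDegree_sum_le_of_forall_le _ _ fun τ _ => natDegree_sum_le_of_forall_le _ _ fun ρ _ => ?_
  split_ifs
  · refine (natDegree_smul_le _ _).trans <| (natDegree_list_prod_le _).trans ?_
    have hlen : ((List.finRange n).filter (· ≠ s)).length ≤ n - 1 := by
      have : ((List.finRange n).filter (· ≠ s)).length < (List.finRange n).length :=
        List.length_filter_lt_length_iff_exists.2 ⟨s, List.mem_finRange s, by simp⟩
      rw [List.length_finRange] at this
      omega
    refine (List.sum_le_card_nsmul _ d ?_).trans ?_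
    · simp only [List.mem_map]
      rintro _ ⟨_, ⟨k, -, rfl⟩, rfl⟩
      exact hP _ _
    · simpa using Nat.mul_le_mul_right d hlen
  · simp

lemma natDegree_charMat_apply_le {n : ℕ} (A : Matrix (Fin n) (Fin n) R) (i j : Fin n) :
    (A.charMat i j).natDegree ≤ 1 := by
  refine (natDegree_sub_le _ _).trans (max_le ?_ (by simp))
  rcases eq_or_ne i j with rfl | h
  · simpa using natDegree_X_le
  · simp [one_apply_ne h]

lemma polyCoeff_preadjoint_charMat {n : ℕ} (A : Matrix (Fin n) (Fin n) R) :
    A.charMat.preadjoint.polyCoeff n = 0 := by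
  ext i j
  refine coeff_eq_zero_of_natDegree_lt ((natDegree_preadjoint_apply_le
    (natDegree_charMat_apply_le A) i j).trans_lt ?_)
  have := i.pos
  omega

end Matrix

open Polynomial in
theorem right_cayley_hamilton_general
    {n : ℕ} {R : Type*} [Ring R] (A : Matrix (Fin n) (Fin n) R)
    (C : ℕ → Matrix (Fin n) (Fin n) R)
    (hC : ∀ k, ∀ i j : Fin n,
      C k i j = ((n • (A.charMat * A.charMat.preadjoint)
        - A.sCharPoly • (1 : Matrix (Fin n) (Fin n) R[X])) i j).coeff k) :
    ∑ i ∈ Finset.range (n + 1),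
      A ^ i * ((A.sCharPoly.coeff i) • (1 : Matrix (Fin n) (Fin n) R) + C i) = 0 := by
  have hcoeff : ∀ k, A.sCharPoly.coeff k • 1 + C k
      = n • (A.charMat * A.charMat.preadjoint).polyCoeff k := fun k => by
    have hCk : C k = (n • (A.charMat * A.charMat.preadjoint)
        - A.sCharPoly • (1 : Matrix (Fin n) (Fin n) R[X])).polyCoeff k := by ext i j; exact hC k i j
    rw [hCk, Matrix.polyCoeff_sub, Matrix.polyCoeff_nsmul, Matrix.polyCoeff_smul_one]
    abel
  have htelescope := Matrix.sum_pow_mul_polyCoeff_charmatrix_mul A A.charMat.preadjoint n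
  rw [Matrix.polyCoeff_preadjoint_charMat, mul_zero, neg_zero] at htelescope
  simp_rw [hcoeff, mul_smul_comm, ← Finset.smul_sum]
  exact (congrArg (n • ·) htelescope).trans (smul_zero _)

open Polynomial in
/-- Theorem 2.2 (right Cayley–Hamilton identity): with
`p(x) = λ₀ + λ₁x + ⋯ + λ_{n-1}x^{n-1} + n!·xⁿ` the symmetric characteristic polynomial of `A`
and `C₀, …, Cₙ` the coefficient matrices of `n·(xI - A)(xI - A)* - p(x)·I`, one has
`(λ₀I + C₀) + A(λ₁I + C₁) + ⋯ + Aⁿ(n!·I + Cₙ) = 0`. -/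
theorem right_cayley_hamilton
    {n : ℕ} (hn : 1 ≤ n) {R : Type*} [Ring R] (A : Matrix (Fin n) (Fin n) R)
    (C : ℕ → Matrix (Fin n) (Fin n) R)
    (hC : ∀ k, ∀ i j : Fin n,
      C k i j = ((n • (A.charMat * A.charMat.preadjoint)
        - A.sCharPoly • (1 : Matrix (Fin n) (Fin n) R[X])) i j).coeff k) :
    ∑ i ∈ Finset.range (n + 1),
      A ^ i * ((A.sCharPoly.coeff i) • (1 : Matrix (Fin n) (Fin n) R) + C i) = 0 :=
  right_cayley_hamilton_general A C hC
end

section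
/- Let R be a ring with 1, n ≥ 1, and A an n×n matrix over R. Let p(x) = λ_0 + λ_1 x + ⋯ + λ_{n−1} x^{n−1} + n!·x^n be the symmetric characteristic polynomial of A, and let D_0, D_1, …, D_n be the coefficient matrices determined by n·(xI − A)*(xI − A) = p(x)·I + D_0 + D_1 x + ⋯ + D_n x^n. Then the left Cayley–Hamilton identity (λ_0 I + D_0) + (λ_1 I + D_1)A + ⋯ + (λ_{n−1} I + D_{n−1})A^{n−1} + (n!·I + D_n)A^n = 0 holds. -/
/-!
Write `(xI - A)* = ∑ₖ Bₖ xᵏ`. Every entry of `(xI - A)*` is a signed sum of products of `n - 1`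
entries of `xI - A`, so `Bₖ = 0` for `k ≥ n`. Comparing coefficients of `xᵏ` in
`n·(xI - A)*(xI - A) = p(x)·I + ∑ Dₖ xᵏ` gives `λₖI + Dₖ = n·(B_{k-1} - Bₖ A)` (with `B₋₁ = 0`),
so the left-hand side telescopes to `-n·Bₙ A^{n+1} = 0`.
-/

open Polynomial

/-- Right substitution of `a` into `(∑ Bₖ xᵏ)(x - a) = ∑ Cₖ xᵏ`, a polynomial over a
noncommutative ring, gives `0`. -/
theorem sum_range_mul_pow_eq_zero_of_eq_mul_X_sub {S : Type*} [Ring S] (B C : ℕ → S) (a : S)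
    (n : ℕ) (hBn : B n = 0) (hC0 : C 0 = -(B 0 * a)) (hC : ∀ k, C (k + 1) = B k - B (k + 1) * a) :
    ∑ k ∈ Finset.range (n + 1), C k * a ^ k = 0 := by
  have hterm : ∀ k, C (k + 1) * a ^ (k + 1) = B k * a ^ (k + 1) - B (k + 1) * a ^ (k + 2) := by
    intro k
    rw [hC, sub_mul, mul_assoc, ← pow_succ']
  rw [Finset.sum_range_succ', Finset.sum_congr rfl fun k _ => hterm k,
    Finset.sum_range_sub' (fun k => B k * a ^ (k + 1)), hC0, hBn]
  simp

theorem Polynomial.natDegree_list_prod_le_length {R : Type*} [Semiring R] (l : List R[X])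
    (hl : ∀ p ∈ l, p.natDegree ≤ 1) : l.prod.natDegree ≤ l.length := by
  refine (natDegree_list_prod_le l).trans ?_
  simpa using List.sum_le_card_nsmul (l.map natDegree) 1 (by simpa using hl)

theorem List.length_filter_finRange_ne {n : ℕ} (s : Fin n) :
    ((List.finRange n).filter (fun k => k ≠ s)).length = n - 1 := by
  have hfilter : (fun k => decide (k ≠ s)) = (· != s) := by
    funext k
    by_cases h : k = s <;> simp [h]
  rw [hfilter, ← (List.nodup_finRange n).erase_eq_filter,
    List.length_erase_of_mem (List.mem_finRange s), List.length_finRange]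

namespace Matrix

def coeffMatrix {m o : Type*} {R : Type*} [Semiring R] (M : Matrix m o R[X]) (k : ℕ) :
    Matrix m o R :=
  M.map (·.coeff k)

@[simp]
theorem coeffMatrix_apply {m o : Type*} {R : Type*} [Semiring R] (M : Matrix m o R[X]) (k : ℕ)
    (i : m) (j : o) : M.coeffMatrix k i j = (M i j).coeff k :=
  rfl

variable {n : ℕ} {R : Type*} [Ring R]

theorem natDegree_preadjoint_le (M : Matrix (Fin n) (Fin n) R[X])
    (hM : ∀ i j, (M i j).natDegree ≤ 1) (r s : Fin n) :
    (M.preadjoint r s).natDegree ≤ n - 1 := by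
  refine natDegree_sum_le_of_forall_le _ _ fun τ _ =>
    natDegree_sum_le_of_forall_le _ _ fun ρ _ => ?_
  split_ifs
  · refine (natDegree_smul_le _ _).trans ?_
    rw [← List.length_filter_finRange_ne s]
    refine (natDegree_list_prod_le_length _ ?_).trans (by simp)
    simp only [List.mem_map]
    rintro _ ⟨k, -, rfl⟩
    exact hM _ _
  · simp

theorem charMat_apply (A : Matrix (Fin n) (Fin n) R) (i j : Fin n) :
    A.charMat i j = (if i = j then X else 0) - C (A i j) := by
  simp [charMat, one_apply]

theorem natDegree_charMat_le (A : Matrix (Fin n) (Fin n) R) (i j : Fin n) :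
    (A.charMat i j).natDegree ≤ 1 := by
  rw [charMat_apply]
  refine (natDegree_sub_le _ _).trans (max_le ?_ (by simp))
  split_ifs
  · exact natDegree_X_le
  · simp

theorem coeffMatrix_preadjoint_charMat_eq_zero (A : Matrix (Fin n) (Fin n) R) {k : ℕ}
    (hk : n ≤ k) : A.charMat.preadjoint.coeffMatrix k = 0 := by
  ext r s
  exact coeff_eq_zero_of_natDegree_lt <|
    (natDegree_preadjoint_le _ (natDegree_charMat_le A) r s).trans_lt (by have := r.pos; omega)

theorem mul_charMat (A : Matrix (Fin n) (Fin n) R) (M : Matrix (Fin n) (Fin n) R[X]) :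
    M * A.charMat = (X : R[X]) • M - M * A.map C := by
  rw [charMat, mul_sub]
  congr 1
  ext i j
  simp [mul_apply, one_apply, X_mul]

theorem coeffMatrix_mul_map_C (A : Matrix (Fin n) (Fin n) R) (M : Matrix (Fin n) (Fin n) R[X])
    (k : ℕ) : (M * A.map C).coeffMatrix k = M.coeffMatrix k * A := by
  ext i j
  simp [mul_apply, finsetSum_coeff]

theorem coeffMatrix_zero_mul_charMat (A : Matrix (Fin n) (Fin n) R)
    (M : Matrix (Fin n) (Fin n) R[X]) :
    (M * A.charMat).coeffMatrix 0 = -(M.coeffMatrix 0 * A) := by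
  rw [mul_charMat, ← coeffMatrix_mul_map_C]
  ext i j
  simp

theorem coeffMatrix_succ_mul_charMat (A : Matrix (Fin n) (Fin n) R)
    (M : Matrix (Fin n) (Fin n) R[X]) (k : ℕ) :
    (M * A.charMat).coeffMatrix (k + 1) = M.coeffMatrix k - M.coeffMatrix (k + 1) * A := by
  rw [mul_charMat, ← coeffMatrix_mul_map_C]
  ext i j
  simp

end Matrix

theorem left_cayley_hamilton_general
    {n : ℕ} {R : Type*} [Ring R] (A : Matrix (Fin n) (Fin n) R)
    (D : ℕ → Matrix (Fin n) (Fin n) R)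
    (hD : ∀ k, ∀ i j : Fin n,
      D k i j = ((n • (A.charMat.preadjoint * A.charMat)
        - A.sCharPoly • (1 : Matrix (Fin n) (Fin n) R[X])) i j).coeff k) :
    ∑ i ∈ Finset.range (n + 1),
      ((A.sCharPoly.coeff i) • (1 : Matrix (Fin n) (Fin n) R) + D i) * A ^ i = 0 := by
  have hcoeff : ∀ k, A.sCharPoly.coeff k • (1 : Matrix (Fin n) (Fin n) R) + D k =
      n • (A.charMat.preadjoint * A.charMat).coeffMatrix k := by
    intro k
    ext i j
    simp only [Matrix.add_apply, Matrix.smul_apply, hD, Matrix.sub_apply, Matrix.one_apply,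
      coeff_sub, Matrix.coeffMatrix_apply]
    split_ifs <;> simp
  refine sum_range_mul_pow_eq_zero_of_eq_mul_X_sub
    (fun k => n • A.charMat.preadjoint.coeffMatrix k) _ A n ?_ ?_ fun k => ?_
  · simp [Matrix.coeffMatrix_preadjoint_charMat_eq_zero A le_rfl]
  · rw [hcoeff, Matrix.coeffMatrix_zero_mul_charMat, smul_neg, smul_mul_assoc]
  · rw [hcoeff, Matrix.coeffMatrix_succ_mul_charMat, smul_sub, smul_mul_assoc]

open Polynomial in
/-- Theorem 2.2 (left Cayley–Hamilton identity): with
`p(x) = λ₀ + λ₁x + ⋯ + λ_{n-1}x^{n-1} + n!·xⁿ` the symmetric characteristic polynomial of `A`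
and `D₀, …, Dₙ` the coefficient matrices of `n·(xI - A)*(xI - A) - p(x)·I`, one has
`(λ₀I + D₀) + (λ₁I + D₁)A + ⋯ + (n!·I + Dₙ)Aⁿ = 0`. -/
theorem left_cayley_hamilton
    {n : ℕ} (hn : 1 ≤ n) {R : Type*} [Ring R] (A : Matrix (Fin n) (Fin n) R)
    (D : ℕ → Matrix (Fin n) (Fin n) R)
    (hD : ∀ k, ∀ i j : Fin n,
      D k i j = ((n • (A.charMat.preadjoint * A.charMat)
        - A.sCharPoly • (1 : Matrix (Fin n) (Fin n) R[X])) i j).coeff k) :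
    ∑ i ∈ Finset.range (n + 1),
      ((A.sCharPoly.coeff i) • (1 : Matrix (Fin n) (Fin n) R) + D i) * A ^ i = 0 :=
  left_cayley_hamilton_general A D hD
end
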